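/- arXiv:0705.0340 — 5 statements merged into one kernel-verified Lean document; each statement's English description precedes it below -/
import Mathlib

section
/- Let 1≤p<∞ and let φ:[0,∞)→[0,∞) be a continuous strictly increasing Orlicz function whose inverse satisfies φ^{-1}(u) = u^{1/p} ρ(u^{-1/p}) for all u>0, where ρ is a concave quasi-concave function with ρ_*(t):=tρ(1/t) mapping (0,∞) onto (0,∞). Then the function ψ(u) := φ(u^{1/p}) is convex on [0,∞). -/
/-!
Write `ρ_*(t) = t ρ(1/t)` (`perspective ρ`). The hypothesis on `φ⁻¹` says that
`ψ(u) = φ(u^{1/p})` is the inverse of `H(v) = ρ_*(v^{1/p})^p`, and an increasing bijection of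
`[0,∞)` whose inverse is concave is convex. The perspective `ρ_*` of the concave `ρ` is concave,
nondecreasing and vanishes at `0`. For such an `f`, the function `v ↦ f(v^{1/p})^p` is concave:
between two points replace `f` by its chord `a + b t` (with `a, b ≥ 0`), which lies below `f`
there, and for `(a + b v^{1/p})^p` concavity is Minkowski's inequality in `ℓ^p` of a two-point
space.
-/

open Set

/-- `ρ : [0,∞) → [0,∞)` is quasi-concave: continuous and positive on `(0,∞)`,
nonnegative, and `ρ(s) ≤ max(1, s/t) ρ(t)` for all `s, t > 0`. -/
def QuasiConcave (ρ : ℝ → ℝ) : Prop :=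
  ContinuousOn ρ (Set.Ioi 0) ∧ (∀ t : ℝ, 0 < t → 0 < ρ t) ∧ 0 ≤ ρ 0 ∧
    ∀ s t : ℝ, 0 < s → 0 < t → ρ s ≤ max 1 (s / t) * ρ t

noncomputable def perspective (ρ : ℝ → ℝ) (t : ℝ) : ℝ := t * ρ (1 / t)

@[simp]
theorem perspective_zero (ρ : ℝ → ℝ) : perspective ρ 0 = 0 := zero_mul _

theorem perspective_rpow_inv (ρ : ℝ → ℝ) {u : ℝ} (hu : 0 ≤ u) (q : ℝ) :
    perspective ρ (u ^ q) = u ^ q * ρ (u ^ (-q)) := by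
  rw [perspective, one_div, Real.rpow_neg hu]

theorem concaveOn_Ioi_perspective {ρ : ℝ → ℝ} (hρ : ConcaveOn ℝ (Ioi 0) ρ) :
    ConcaveOn ℝ (Ioi 0) (perspective ρ) := by
  refine ⟨convex_Ioi 0, fun u (hu : 0 < u) w (hw : 0 < w) a b ha hb hab => ?_⟩
  have hz : 0 < a * u + b * w := convex_Ioi (0 : ℝ) hu hw ha hb hab
  -- with `z = a u + b w`, apply concavity of `ρ` at `1/u, 1/w` with the weights `a u / z, b w / z`
  have key := hρ.2 (mem_Ioi.2 (one_div_pos.2 hu)) (mem_Ioi.2 (one_div_pos.2 hw))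
    (by positivity : 0 ≤ a * u / (a * u + b * w)) (by positivity : 0 ≤ b * w / (a * u + b * w))
    (by field_simp)
  have harg : a * u / (a * u + b * w) * (1 / u) + b * w / (a * u + b * w) * (1 / w)
      = 1 / (a * u + b * w) := by field_simp; rw [hab]
  simp only [smul_eq_mul, harg] at key
  simp only [smul_eq_mul, perspective]
  calc a * (u * ρ (1 / u)) + b * (w * ρ (1 / w))
      = (a * u + b * w) * (a * u / (a * u + b * w) * ρ (1 / u)
          + b * w / (a * u + b * w) * ρ (1 / w)) := by field_simp
    _ ≤ (a * u + b * w) * ρ (1 / (a * u + b * w)) := mul_le_mul_of_nonneg_left key hz.le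

theorem concaveOn_Ici_of_concaveOn_Ioi {f : ℝ → ℝ} (hf : ConcaveOn ℝ (Ioi 0) f)
    (hf0 : f 0 = 0) (hdiv : AntitoneOn (fun t => f t / t) (Ioi 0)) : ConcaveOn ℝ (Ici 0) f := by
  have hscale : ∀ t, 0 ≤ t → ∀ c, 0 ≤ c → c ≤ 1 → c * f t ≤ f (c * t) := by
    intro t ht c hc hc1
    rcases ht.eq_or_lt with rfl | ht
    · simp [hf0]
    rcases hc.eq_or_lt with rfl | hc
    · simp [hf0]
    have h := hdiv (mem_Ioi.2 (by positivity)) (mem_Ioi.2 ht) (mul_le_of_le_one_left ht.le hc1)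
    calc c * f t = c * t * (f t / t) := by field_simp
      _ ≤ c * t * (f (c * t) / (c * t)) := mul_le_mul_of_nonneg_left h (by positivity)
      _ = f (c * t) := by field_simp
  refine ⟨convex_Ici 0, fun x (hx : 0 ≤ x) y (hy : 0 ≤ y) a b ha hb hab => ?_⟩
  simp only [smul_eq_mul]
  rcases hx.eq_or_lt with rfl | hx
  · simpa [hf0] using hscale y hy b hb (by linarith)
  rcases hy.eq_or_lt with rfl | hy
  · simpa [hf0] using hscale x hx.le a ha (by linarith)
  exact hf.2 hx hy ha hb hab

namespace QuasiConcave

variable {ρ : ℝ → ℝ}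

theorem monotoneOn (hρ : QuasiConcave ρ) : MonotoneOn ρ (Ioi 0) := by
  intro s (hs : 0 < s) t (ht : 0 < t) hst
  simpa [max_eq_left ((div_le_one ht).2 hst)] using hρ.2.2.2 s t hs ht

theorem perspective_nonneg (hρ : QuasiConcave ρ) {t : ℝ} (ht : 0 ≤ t) :
    0 ≤ perspective ρ t := by
  rcases ht.eq_or_lt with rfl | ht
  · simp
  exact mul_nonneg ht.le (hρ.2.1 _ (one_div_pos.2 ht)).le

theorem monotoneOn_perspective (hρ : QuasiConcave ρ) : MonotoneOn (perspective ρ) (Ici 0) := by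
  intro s (hs : 0 ≤ s) t (ht : 0 ≤ t) hst
  rcases hs.eq_or_lt with rfl | hs
  · simpa using hρ.perspective_nonneg ht
  have ht : 0 < t := hs.trans_le hst
  have h := hρ.2.2.2 (1 / s) (1 / t) (one_div_pos.2 hs) (one_div_pos.2 ht)
  rw [max_eq_right ((one_le_div (one_div_pos.2 ht)).2 (one_div_le_one_div_of_le hs hst))] at h
  calc s * ρ (1 / s) ≤ s * (1 / s / (1 / t) * ρ (1 / t)) := mul_le_mul_of_nonneg_left h hs.le
    _ = t * ρ (1 / t) := by field_simp

theorem concaveOn_perspective (hρ : QuasiConcave ρ) (hconc : ConcaveOn ℝ (Ioi 0) ρ) :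
    ConcaveOn ℝ (Ici 0) (perspective ρ) := by
  refine concaveOn_Ici_of_concaveOn_Ioi (concaveOn_Ioi_perspective hconc) (perspective_zero ρ) ?_
  intro s (hs : 0 < s) t (ht : 0 < t) hst
  simp only [perspective, mul_div_cancel_left₀ _ hs.ne', mul_div_cancel_left₀ _ ht.ne']
  exact hρ.monotoneOn (one_div_pos.2 ht) (one_div_pos.2 hs) (one_div_le_one_div_of_le hs hst)

end QuasiConcave

theorem concaveOn_rpow_add_mul_rpow_inv {p a b : ℝ} (hp : 1 ≤ p) (ha : 0 ≤ a) (hb : 0 ≤ b) :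
    ConcaveOn ℝ (Ici 0) (fun v : ℝ => (a + b * v ^ p⁻¹) ^ p) := by
  refine ⟨convex_Ici 0, fun A (hA : 0 ≤ A) B (hB : 0 ≤ B) l m hl hm hlm => ?_⟩
  have hp0 : p ≠ 0 := by positivity
  have hweight : ∀ c x : ℝ, 0 ≤ c → 0 ≤ x → (c ^ p⁻¹ * x) ^ p = c * x ^ p := by
    intro c x hc hx
    rw [Real.mul_rpow (by positivity) hx, Real.rpow_inv_rpow hc hp0]
  -- Minkowski in `ℓ^p` of the two-point space with weights `l, m`
  have hmink := Real.Lp_add_le_of_nonneg (s := Finset.univ) (f := ![l ^ p⁻¹ * a, m ^ p⁻¹ * a])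
    (g := ![l ^ p⁻¹ * (b * A ^ p⁻¹), m ^ p⁻¹ * (b * B ^ p⁻¹)]) hp
    (fun i _ => by fin_cases i <;> simpa using by positivity)
    (fun i _ => by fin_cases i <;> simpa using by positivity)
  simp only [Fin.sum_univ_two, Matrix.cons_val_zero, Matrix.cons_val_one, ← mul_add] at hmink
  rw [hweight _ _ hl (by positivity), hweight _ _ hm (by positivity), hweight _ _ hl ha,
    hweight _ _ hm ha, hweight _ _ hl (by positivity), hweight _ _ hm (by positivity),
    Real.mul_rpow hb (by positivity), Real.mul_rpow hb (by positivity),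
    Real.rpow_inv_rpow hA hp0, Real.rpow_inv_rpow hB hp0, ← add_mul, hlm, one_mul, one_div,
    Real.rpow_rpow_inv ha hp0] at hmink
  have hsum : l * (b ^ p * A) + m * (b ^ p * B) = b ^ p * (l • A + m • B) := by
    simp only [smul_eq_mul]; ring
  rw [hsum, Real.mul_rpow (by positivity) (by positivity), Real.rpow_rpow_inv hb hp0] at hmink
  have := Real.rpow_le_rpow (by positivity) hmink (by positivity : 0 ≤ p)
  rwa [Real.rpow_inv_rpow (by positivity) hp0] at this

theorem ConcaveOn.exists_chord_of_monotoneOn {f : ℝ → ℝ} (hf : ConcaveOn ℝ (Ici 0) f)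
    (hmono : MonotoneOn f (Ici 0)) (hf0 : 0 ≤ f 0) {x y : ℝ} (hy : 0 ≤ y) (hyx : y ≤ x) :
    ∃ a b : ℝ, 0 ≤ a ∧ 0 ≤ b ∧ f y = a + b * y ∧ f x = a + b * x ∧
      ∀ s ∈ Icc y x, a + b * s ≤ f s := by
  obtain rfl | hlt := hyx.eq_or_lt
  · refine ⟨f y, 0, hf0.trans (hmono (mem_Ici.2 le_rfl) hy hy), le_rfl, by ring, by ring, ?_⟩
    rintro s ⟨hys, hsy⟩
    rw [le_antisymm hsy hys, zero_mul, add_zero]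
  have hxy : 0 < x - y := sub_pos.2 hlt
  have hb : 0 ≤ (f x - f y) / (x - y) :=
    div_nonneg (sub_nonneg.2 (hmono hy (hy.trans hyx) hyx)) hxy.le
  -- the chord meets the vertical axis above `f 0`, since slopes of a concave function decrease
  have hby : (f x - f y) / (x - y) * y ≤ f y - f 0 := by
    obtain rfl | hy' := hy.eq_or_lt
    · simp
    have := hf.slope_anti_adjacent (mem_Ici.2 le_rfl) (mem_Ici.2 (hy.trans hyx)) hy' hlt
    rwa [sub_zero, le_div_iff₀ hy'] at this
  refine ⟨f y - (f x - f y) / (x - y) * y, (f x - f y) / (x - y), by linarith, hb, by ring,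
    by field_simp; ring, ?_⟩
  rintro s ⟨hys, hsx⟩
  have key := hf.2 (mem_Ici.2 hy) (mem_Ici.2 (hy.trans hyx))
    (div_nonneg (sub_nonneg.2 hsx) hxy.le) (div_nonneg (sub_nonneg.2 hys) hxy.le)
    (by field_simp; ring)
  simp only [smul_eq_mul] at key
  calc f y - (f x - f y) / (x - y) * y + (f x - f y) / (x - y) * s
      = (x - s) / (x - y) * f y + (s - y) / (x - y) * f x := by field_simp; ring
    _ ≤ _ := key
    _ = f s := by congr 1; field_simp; ring

theorem ConcaveOn.rpow_comp_rpow_inv {f : ℝ → ℝ} {p : ℝ} (hf : ConcaveOn ℝ (Ici 0) f)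
    (hmono : MonotoneOn f (Ici 0)) (hf0 : 0 ≤ f 0) (hp : 1 ≤ p) :
    ConcaveOn ℝ (Ici 0) (fun v : ℝ => f (v ^ p⁻¹) ^ p) := by
  refine ⟨convex_Ici 0, fun A (hA : 0 ≤ A) B (hB : 0 ≤ B) l m hl hm hlm => ?_⟩
  wlog hBA : B ≤ A generalizing A B l m
  · simpa only [add_comm] using this B hB A hA m l hm hl (by linarith) (le_of_not_ge hBA)
  have hq : 0 ≤ p⁻¹ := by positivity
  have hS : l • A + m • B ∈ Icc B A :=
    ⟨by simp only [smul_eq_mul]; nlinarith, by simp only [smul_eq_mul]; nlinarith⟩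
  obtain ⟨a, b, ha, hb, hfy, hfx, hchord⟩ := hf.exists_chord_of_monotoneOn hmono hf0
    (Real.rpow_nonneg hB _) (Real.rpow_le_rpow hB hBA hq)
  have hs := hchord _ ⟨Real.rpow_le_rpow hB hS.1 hq, Real.rpow_le_rpow (hB.trans hS.1) hS.2 hq⟩
  calc l • f (A ^ p⁻¹) ^ p + m • f (B ^ p⁻¹) ^ p
      = l • (a + b * A ^ p⁻¹) ^ p + m • (a + b * B ^ p⁻¹) ^ p := by rw [hfx, hfy]
    _ ≤ (a + b * (l • A + m • B) ^ p⁻¹) ^ p :=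
      (concaveOn_rpow_add_mul_rpow_inv hp ha hb).2 hA hB hl hm hlm
    _ ≤ f ((l • A + m • B) ^ p⁻¹) ^ p :=
      Real.rpow_le_rpow (by positivity) hs (by positivity)

theorem surjOn_rpow_comp_rpow_inv {f : ℝ → ℝ} {p : ℝ} (hp : p ≠ 0) (hf0 : f 0 = 0)
    (hf : SurjOn f (Ioi 0) (Ioi 0)) :
    SurjOn (fun v : ℝ => f (v ^ p⁻¹) ^ p) (Ici 0) (Ici 0) := by
  rintro c (hc : 0 ≤ c)
  rcases hc.eq_or_lt with rfl | hc
  · exact ⟨0, mem_Ici.2 le_rfl, by simp [Real.zero_rpow (inv_ne_zero hp), hf0, hp]⟩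
  obtain ⟨t, ht : 0 < t, htc⟩ := hf (mem_Ioi.2 (Real.rpow_pos_of_pos hc p⁻¹))
  exact ⟨t ^ p, Real.rpow_nonneg ht.le _, by
    simp only [Real.rpow_rpow_inv ht.le hp, htc, Real.rpow_inv_rpow hc.le hp]⟩

theorem convexOn_of_leftInvOn_concaveOn {𝕜 E β : Type*} [Semiring 𝕜] [PartialOrder 𝕜]
    [AddCommMonoid E] [PartialOrder E] [IsOrderedAddMonoid E] [Module 𝕜 E]
    [AddCommMonoid β] [PartialOrder β] [IsOrderedAddMonoid β] [Module 𝕜 β]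
    {s : Set E} {t : Set β} {ψ : E → β} {H : β → E}
    (hs : Convex 𝕜 s) (hH : ConcaveOn 𝕜 t H) (hmaps : MapsTo H t s) (hsurj : SurjOn H t s)
    (hψ : MonotoneOn ψ s) (hinv : LeftInvOn ψ H t) : ConvexOn 𝕜 s ψ := by
  refine ⟨hs, ?_⟩
  rintro _ hc _ hd a b ha hb hab
  obtain ⟨v, hv, rfl⟩ := hsurj hc
  obtain ⟨w, hw, rfl⟩ := hsurj hd
  have hvw : a • v + b • w ∈ t := hH.1 hv hw ha hb hab
  calc ψ (a • H v + b • H w) ≤ ψ (H (a • v + b • w)) :=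
        hψ (hs hc hd ha hb hab) (hmaps hvw) (hH.2 hv hw ha hb hab)
    _ = a • ψ (H v) + b • ψ (H w) := by rw [hinv hvw, hinv hv, hinv hw]

theorem stmt4_general (p : ℝ) (hp : 1 ≤ p)
    -- `φ` is a continuous strictly increasing Orlicz function
    (φ : ℝ → ℝ)
    (hφ0 : φ 0 = 0)
    (hφsm : StrictMonoOn φ (Set.Ici 0))
    -- `φ⁻¹(u) = u^{1/p} ρ(u^{-1/p})` for `u > 0`
    (ρ : ℝ → ℝ) (hρ : QuasiConcave ρ) (hρconc : ConcaveOn ℝ (Set.Ici 0) ρ)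
    (hρstar : Set.SurjOn (fun t : ℝ => t * ρ (1 / t)) (Set.Ioi 0) (Set.Ioi 0))
    (hinv : ∀ u : ℝ, 0 < u → φ (u ^ (1/p) * ρ (u ^ (-(1/p)))) = u) :
    ConvexOn ℝ (Set.Ici 0) (fun u : ℝ => φ (u ^ (1/p))) := by
  simp only [one_div] at hinv ⊢
  have hp0 : p ≠ 0 := by positivity
  have hφR : ∀ u, 0 ≤ u → φ (perspective ρ (u ^ p⁻¹)) = u := by
    intro u hu
    rcases hu.eq_or_lt with rfl | hu
    · rw [Real.zero_rpow (inv_ne_zero hp0), perspective_zero, hφ0]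
    · rw [perspective_rpow_inv ρ hu.le]
      exact hinv u hu
  have hH := (hρ.concaveOn_perspective (hρconc.subset Ioi_subset_Ici_self (convex_Ioi 0))
    ).rpow_comp_rpow_inv hρ.monotoneOn_perspective (perspective_zero ρ).ge hp
  refine convexOn_of_leftInvOn_concaveOn (convex_Ici 0) hH
    (fun v hv => Real.rpow_nonneg (hρ.perspective_nonneg (Real.rpow_nonneg hv _)) _)
    (surjOn_rpow_comp_rpow_inv hp0 (perspective_zero ρ) hρstar)
    (hφsm.monotoneOn.comp (Real.monotoneOn_rpow_Ici_of_exponent_nonneg (by positivity))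
      fun u hu => Real.rpow_nonneg hu _) fun v (hv : 0 ≤ v) => ?_
  simp only [Real.rpow_rpow_inv (hρ.perspective_nonneg (Real.rpow_nonneg hv _)) hp0]
  exact hφR v hv

theorem stmt4 (p : ℝ) (hp : 1 ≤ p)
    -- `φ` is a continuous strictly increasing Orlicz function
    (φ : ℝ → ℝ)
    (hφ0 : φ 0 = 0)
    (hφnonneg : ∀ u : ℝ, 0 ≤ u → 0 ≤ φ u)
    (hφcont : ContinuousOn φ (Set.Ici 0))
    (hφsm : StrictMonoOn φ (Set.Ici 0))
    (hφconv : ConvexOn ℝ (Set.Ici 0) φ)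
    -- `φ⁻¹(u) = u^{1/p} ρ(u^{-1/p})` for `u > 0`
    (ρ : ℝ → ℝ) (hρ : QuasiConcave ρ) (hρconc : ConcaveOn ℝ (Set.Ici 0) ρ)
    (hρstar : Set.SurjOn (fun t : ℝ => t * ρ (1 / t)) (Set.Ioi 0) (Set.Ioi 0))
    (hinv : ∀ u : ℝ, 0 < u → φ (u ^ (1/p) * ρ (u ^ (-(1/p)))) = u) :
    ConvexOn ℝ (Set.Ici 0) (fun u : ℝ => φ (u ^ (1/p))) :=
  stmt4_general p hp φ hφ0 hφsm ρ hρ hρconc hρstar hinv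
end

section
/- Suppose 1≤p<q<∞ and for some concave quasi-concave function ρ the function φ satisfies φ^{-1}(u) = u^{1/p} ρ(u^{1/q-1/p}) for all u>0 (i.e., φ is the inverse on (0,∞) of the function u ↦ u^{1/p} ρ(u^{1/q-1/p})). Then φ is convex on [0,∞) and there exists a quasi-concave function h such that φ(u) = u^q h(u^{p-q}) for all u>0. -/
/-!
`φ⁻¹(u) = u^{1/p} ρ(u^{1/q} / u^{1/p})` is the perspective `(x, y) ↦ y ρ(x / y)` of the concave,
nondecreasing `ρ`, evaluated at the concave functions `u^{1/q}` and `u^{1/p}`. The perspective is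
concave and nondecreasing in both arguments, so `φ⁻¹` is concave and its increasing inverse `φ` is
convex.

Quasi-concavity of `ρ` says that `ρ(t)` increases while `ρ(t) / t` decreases. This two-sided power
control passes from `ρ` (exponents `0, 1`) to `φ⁻¹` (exponents `1/q, 1/p`), to its inverse `φ`
(exponents `p, q`), and to `h(s) = s^{q/(q-p)} φ(s^{1/(p-q)})` (exponents `0, 1` again), which
makes `h` quasi-concave.
-/

open Set

/-- `f u / u ^ a` is nondecreasing and `f u / u ^ b` is nonincreasing on `(0, ∞)`. -/
def HasScalingBounds (f : ℝ → ℝ) (a b : ℝ) : Prop :=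
  ∀ ⦃u v : ℝ⦄, 0 < u → u ≤ v → (v / u) ^ a * f u ≤ f v ∧ f v ≤ (v / u) ^ b * f u

theorem QuasiConcave.hasScalingBounds {ρ : ℝ → ℝ} (hρ : QuasiConcave ρ) :
    HasScalingBounds ρ 0 1 := by
  intro u v hu huv
  have hv := hu.trans_le huv
  have hle := hρ.2.2.2 u v hu hv
  have hge := hρ.2.2.2 v u hv hu
  rw [max_eq_left ((div_le_one hv).2 huv)] at hle
  rw [max_eq_right ((one_le_div hu).2 huv)] at hge
  exact ⟨by simpa using hle, by simpa using hge⟩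

namespace HasScalingBounds

variable {f : ℝ → ℝ} {a b : ℝ}

theorem quasiConcave (hf : HasScalingBounds f 0 1) (hcont : ContinuousOn f (Ioi 0))
    (hpos : ∀ t, 0 < t → 0 < f t) (h0 : 0 ≤ f 0) : QuasiConcave f := by
  refine ⟨hcont, hpos, h0, fun s t hs ht => ?_⟩
  rcases le_total s t with hst | hts
  · calc f s ≤ f t := by simpa using (hf hs hst).1
      _ ≤ max 1 (s / t) * f t := le_mul_of_one_le_left (hpos t ht).le (le_max_left _ _)
  · calc f s ≤ (s / t) * f t := by simpa using (hf ht hts).2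
      _ ≤ max 1 (s / t) * f t := mul_le_mul_of_nonneg_right (le_max_right _ _) (hpos t ht).le

theorem monotoneOn (hf : HasScalingBounds f 0 b) : MonotoneOn f (Ioi 0) :=
  fun u hu _ _ huv => by simpa using (hf hu huv).1

theorem strictMonoOn (hf : HasScalingBounds f a b) (ha : 0 < a) (hpos : ∀ u, 0 < u → 0 < f u) :
    StrictMonoOn f (Ioi 0) := fun u hu _ _ huv =>
  calc f u < (_ / u) ^ a * f u :=
        lt_mul_of_one_lt_left (hpos u hu) (Real.one_lt_rpow ((one_lt_div hu).2 huv) ha)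
    _ ≤ _ := (hf hu huv.le).1

theorem comp_rpow (hf : HasScalingBounds f a b) (k : ℝ) {e : ℝ} (he : e ≤ 0) :
    HasScalingBounds (fun s => s ^ k * f (s ^ e)) (k + e * b) (k + e * a) := by
  intro s t hs hst
  have ht := hs.trans_le hst
  set r := t / s
  have hr : 0 < r := div_pos ht hs
  have hratio : s ^ e / t ^ e = r ^ (-e) := by
    rw [Real.div_rpow ht.le hs.le, Real.rpow_neg ht.le, Real.rpow_neg hs.le, inv_div_inv]
  obtain ⟨hlo, hup⟩ := hf (Real.rpow_pos_of_pos ht e) (Real.rpow_le_rpow_of_nonpos hs hst he)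
  rw [hratio, ← Real.rpow_mul hr.le] at hlo hup
  have htk : t ^ k = r ^ k * s ^ k := by
    rw [← Real.mul_rpow hr.le hs.le, div_mul_cancel₀ _ hs.ne']
  have hcancel : ∀ x, r ^ (k + e * x) * r ^ (-e * x) = r ^ k := fun x => by
    rw [← Real.rpow_add hr]; ring_nf
  constructor
  · calc r ^ (k + e * b) * (s ^ k * f (s ^ e))
        ≤ r ^ (k + e * b) * (s ^ k * (r ^ (-e * b) * f (t ^ e))) := by gcongr
      _ = t ^ k * f (t ^ e) := by rw [htk, ← hcancel b]; ring
  · calc t ^ k * f (t ^ e) = r ^ (k + e * a) * (s ^ k * (r ^ (-e * a) * f (t ^ e))) := by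
          rw [htk, ← hcancel a]; ring
      _ ≤ r ^ (k + e * a) * (s ^ k * f (s ^ e)) := by gcongr

theorem surjOn (hf : HasScalingBounds f a b) (ha : 0 < a) (hcont : ContinuousOn f (Ioi 0))
    (h1 : 0 < f 1) : SurjOn f (Ioi 0) (Ioi 0) := by
  intro x (hx : 0 < x)
  set c := (x / f 1) ^ a⁻¹
  have hc : 0 < c := Real.rpow_pos_of_pos (div_pos hx h1) _
  have hca : c ^ a * f 1 = x := by
    rw [← Real.rpow_mul (div_pos hx h1).le, inv_mul_cancel₀ ha.ne', Real.rpow_one,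
      div_mul_cancel₀ _ h1.ne']
  have hmin : 0 < min 1 c := lt_min one_pos hc
  have hlo : f (min 1 c) ≤ x := by
    have h := (hf hmin (min_le_left 1 c)).1
    rw [one_div, Real.inv_rpow hmin.le, inv_mul_le_iff₀ (Real.rpow_pos_of_pos hmin a)] at h
    calc f (min 1 c) ≤ (min 1 c) ^ a * f 1 := h
      _ ≤ c ^ a * f 1 := by gcongr; exact min_le_right 1 c
      _ = x := hca
  have hhi : x ≤ f (max 1 c) := by
    have h := (hf one_pos (le_max_left 1 c)).1
    rw [div_one] at h
    calc x = c ^ a * f 1 := hca.symm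
      _ ≤ (max 1 c) ^ a * f 1 := by gcongr; exact le_max_right 1 c
      _ ≤ f (max 1 c) := h
  have hsub : Icc (min 1 c) (max 1 c) ⊆ Ioi 0 := fun y hy => hmin.trans_le hy.1
  obtain ⟨u, hu, rfl⟩ := intermediate_value_Icc min_le_max (hcont.mono hsub) ⟨hlo, hhi⟩
  exact ⟨u, hsub hu, rfl⟩

theorem of_rightInvOn {g : ℝ → ℝ} (hf : HasScalingBounds f a b) (ha : 0 < a) (hb : 0 < b)
    (hpos : ∀ u, 0 < u → 0 < f u) (hmaps : MapsTo g (Ioi 0) (Ioi 0))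
    (hinv : RightInvOn g f (Ioi 0)) : HasScalingBounds g b⁻¹ a⁻¹ := by
  intro x y hx hxy
  have hy := hx.trans_le hxy
  have hgx : 0 < g x := hmaps hx
  have hgy : 0 < g y := hmaps hy
  have hmono : g x ≤ g y := by
    rw [← (hf.strictMonoOn ha hpos).le_iff_le hgx hgy, hinv hx, hinv hy]; exact hxy
  obtain ⟨hlo, hup⟩ := hf hgx hmono
  rw [hinv hx, hinv hy, ← le_div_iff₀ hx] at hlo
  rw [hinv hx, hinv hy, ← div_le_iff₀ hx] at hup
  constructor
  · rw [← le_div_iff₀ hgx, Real.rpow_inv_le_iff_of_pos (by positivity) (by positivity) hb]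
    exact hup
  · rw [← div_le_iff₀ hgx, Real.le_rpow_inv_iff_of_pos (by positivity) (by positivity) ha]
    exact hlo

theorem mul_le_apply_mul (hf : HasScalingBounds f a b) (hb : b ≤ 1)
    (hf0 : ∀ u, 0 < u → 0 ≤ f u) {c u : ℝ} (hc : 0 < c) (hc1 : c ≤ 1) (hu : 0 < u) :
    c * f u ≤ f (c * u) := by
  have hcu : 0 < c * u := mul_pos hc hu
  have h := (hf hcu (mul_le_of_le_one_left hu.le hc1)).2
  rw [div_mul_cancel_right₀ hu.ne'] at h
  have hpow : c⁻¹ ^ b ≤ c⁻¹ := by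
    simpa using Real.rpow_le_rpow_of_exponent_le (one_le_inv₀ hc |>.2 hc1) hb
  calc c * f u ≤ c * (c⁻¹ * f (c * u)) := by
        gcongr; exact h.trans (mul_le_mul_of_nonneg_right hpow (hf0 _ hcu))
    _ = f (c * u) := by field_simp

theorem mul_apply_div_le (hf : HasScalingBounds f a 1) {x y y' : ℝ} (hx : 0 < x) (hy : 0 < y)
    (hyy' : y ≤ y') : y * f (x / y) ≤ y' * f (x / y') := by
  have hy' := hy.trans_le hyy'
  have h := (hf (div_pos hx hy') (div_le_div_of_nonneg_left hx.le hy hyy')).2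
  rw [Real.rpow_one, div_div_div_cancel_left' _ _ hx.ne'] at h
  calc y * f (x / y) ≤ y * (y' / y * f (x / y')) := by gcongr
    _ = y' * f (x / y') := by field_simp

end HasScalingBounds

theorem ConcaveOn.mul_apply_div_add_le {ρ : ℝ → ℝ} (hρ : ConcaveOn ℝ (Ici 0) ρ)
    {x₁ x₂ y₁ y₂ a b : ℝ} (hx₁ : 0 ≤ x₁) (hx₂ : 0 ≤ x₂) (hy₁ : 0 < y₁) (hy₂ : 0 < y₂)
    (ha : 0 ≤ a) (hb : 0 ≤ b) (hab : a + b = 1) :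
    a * (y₁ * ρ (x₁ / y₁)) + b * (y₂ * ρ (x₂ / y₂)) ≤
      (a * y₁ + b * y₂) * ρ ((a * x₁ + b * x₂) / (a * y₁ + b * y₂)) := by
  set Y := a * y₁ + b * y₂
  have hY : 0 < Y := convex_Ioi (0 : ℝ) hy₁ hy₂ ha hb hab
  -- concavity of `ρ` at the weights `a y₁ / Y` and `b y₂ / Y`
  have h := hρ.2 (mem_Ici.2 (div_nonneg hx₁ hy₁.le)) (mem_Ici.2 (div_nonneg hx₂ hy₂.le))
    (div_nonneg (mul_nonneg ha hy₁.le) hY.le) (div_nonneg (mul_nonneg hb hy₂.le) hY.le)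
    (by rw [← add_div, div_self hY.ne'])
  have hcomb : a * y₁ / Y * (x₁ / y₁) + b * y₂ / Y * (x₂ / y₂) = (a * x₁ + b * x₂) / Y := by
    field_simp
  simp only [smul_eq_mul, hcomb] at h
  calc a * (y₁ * ρ (x₁ / y₁)) + b * (y₂ * ρ (x₂ / y₂))
      = Y * (a * y₁ / Y * ρ (x₁ / y₁) + b * y₂ / Y * ρ (x₂ / y₂)) := by field_simp
    _ ≤ Y * ρ ((a * x₁ + b * x₂) / Y) := by gcongr

theorem ConcaveOn.mul_comp_div {E : Type*} [AddCommGroup E] [Module ℝ E] {s : Set E}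
    {ρ : ℝ → ℝ} {f g : E → ℝ} (hρc : ConcaveOn ℝ (Ici 0) ρ) (hρ : HasScalingBounds ρ 0 1)
    (hf : ConcaveOn ℝ s f) (hg : ConcaveOn ℝ s g) (hf0 : ∀ u ∈ s, 0 < f u)
    (hg0 : ∀ u ∈ s, 0 < g u) : ConcaveOn ℝ s (fun u => g u * ρ (f u / g u)) := by
  refine ⟨hf.1, fun u hu v hv a b ha hb hab => ?_⟩
  have hw := hf.1 hu hv ha hb hab
  have hF := hf.2 hu hv ha hb hab
  have hG := hg.2 hu hv ha hb hab
  have hF0 : 0 < a * f u + b * f v := convex_Ioi (0 : ℝ) (hf0 u hu) (hf0 v hv) ha hb hab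
  have hG0 : 0 < a * g u + b * g v := convex_Ioi (0 : ℝ) (hg0 u hu) (hg0 v hv) ha hb hab
  simp only [smul_eq_mul] at hF hG ⊢
  calc a * (g u * ρ (f u / g u)) + b * (g v * ρ (f v / g v))
      ≤ (a * g u + b * g v) * ρ ((a * f u + b * f v) / (a * g u + b * g v)) :=
        hρc.mul_apply_div_add_le (hf0 u hu).le (hf0 v hv).le (hg0 u hu) (hg0 v hv) ha hb hab
    _ ≤ (a * g u + b * g v) * ρ (f (a • u + b • v) / (a * g u + b * g v)) := by
        gcongr
        exact hρ.monotoneOn (div_pos hF0 hG0) (div_pos (hf0 _ hw) hG0) (by gcongr)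
    _ ≤ g (a • u + b • v) * ρ (f (a • u + b • v) / g (a • u + b • v)) :=
        hρ.mul_apply_div_le (hf0 _ hw) hG0 hG

theorem ConcaveOn.concaveOn_Ici_of_mul_le {f : ℝ → ℝ} (hf : ConcaveOn ℝ (Ioi 0) f)
    (h0 : f 0 = 0) (hscale : ∀ c u, 0 < c → c ≤ 1 → 0 < u → c * f u ≤ f (c * u)) :
    ConcaveOn ℝ (Ici 0) f := by
  have hscale' : ∀ c u, 0 ≤ c → c ≤ 1 → 0 ≤ u → c * f u ≤ f (c * u) := by
    intro c u hc hc1 hu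
    rcases hc.eq_or_lt with rfl | hc
    · simp [h0]
    rcases hu.eq_or_lt with rfl | hu
    · simp [h0]
    exact hscale c u hc hc1 hu
  refine ⟨convex_Ici 0, fun x (hx : 0 ≤ x) y (hy : 0 ≤ y) a b ha hb hab => ?_⟩
  simp only [smul_eq_mul]
  rcases hx.eq_or_lt with rfl | hx
  · simpa [h0] using hscale' b y hb (by linarith) hy
  rcases hy.eq_or_lt with rfl | hy
  · simpa [h0] using hscale' a x ha (by linarith) hx.le
  exact hf.2 hx hy ha hb hab

theorem ConcaveOn.convexOn_of_rightInvOn {ψ φ : ℝ → ℝ} {s t : Set ℝ} (hψ : ConcaveOn ℝ s ψ)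
    (hmono : StrictMonoOn ψ s) (ht : Convex ℝ t) (hmaps : MapsTo φ t s)
    (hinv : RightInvOn φ ψ t) : ConvexOn ℝ t φ := by
  refine ⟨ht, fun x hx y hy a b ha hb hab => ?_⟩
  have hxy := ht hx hy ha hb hab
  rw [← hmono.le_iff_le (hmaps hxy) (hψ.1 (hmaps hx) (hmaps hy) ha hb hab), hinv hxy]
  calc a • x + b • y = a • ψ (φ x) + b • ψ (φ y) := by rw [hinv hx, hinv hy]
    _ ≤ ψ (a • φ x + b • φ y) := hψ.2 (hmaps hx) (hmaps hy) ha hb hab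

theorem continuousOn_Ioi_rpow (e : ℝ) : ContinuousOn (fun u : ℝ => u ^ e) (Ioi 0) :=
  continuousOn_id.rpow_const fun _ hu => Or.inl (ne_of_gt hu)

/-- The function written `φ⁻¹` in the statement. -/
noncomputable def phiInv (p q : ℝ) (ρ : ℝ → ℝ) (u : ℝ) : ℝ :=
  u ^ (1 / p) * ρ (u ^ (1 / q - 1 / p))

section phiInv

variable {p q : ℝ} {ρ : ℝ → ℝ}

theorem phiInv_zero (hp : p ≠ 0) : phiInv p q ρ 0 = 0 := by
  rw [phiInv, Real.zero_rpow (one_div_ne_zero hp), zero_mul]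

theorem phiInv_pos (hρ : QuasiConcave ρ) {u : ℝ} (hu : 0 < u) : 0 < phiInv p q ρ u :=
  mul_pos (Real.rpow_pos_of_pos hu _) (hρ.2.1 _ (Real.rpow_pos_of_pos hu _))

theorem continuousOn_phiInv (hρ : QuasiConcave ρ) : ContinuousOn (phiInv p q ρ) (Ioi 0) :=
  (continuousOn_Ioi_rpow _).mul
    (hρ.1.comp (continuousOn_Ioi_rpow _) fun _ hu => Real.rpow_pos_of_pos hu _)

theorem hasScalingBounds_phiInv (hp : 0 < p) (hpq : p ≤ q) (hρ : HasScalingBounds ρ 0 1) :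
    HasScalingBounds (phiInv p q ρ) (1 / q) (1 / p) := by
  have h := hρ.comp_rpow (1 / p) (sub_nonpos.2 (one_div_le_one_div_of_le hp hpq))
  rwa [mul_one, mul_zero, add_zero, add_sub_cancel] at h

theorem strictMonoOn_phiInv (hp : 0 < p) (hpq : p ≤ q) (hρ : QuasiConcave ρ) :
    StrictMonoOn (phiInv p q ρ) (Ici 0) := by
  intro u (hu : 0 ≤ u) v _ huv
  rcases hu.eq_or_lt with rfl | hu
  · rw [phiInv_zero hp.ne']; exact phiInv_pos hρ huv
  exact (hasScalingBounds_phiInv hp hpq hρ.hasScalingBounds).strictMonoOn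
    (one_div_pos.2 (hp.trans_le hpq)) (fun _ => phiInv_pos hρ) hu (hu.trans huv) huv

theorem surjOn_phiInv (hp : 0 < p) (hpq : p ≤ q) (hρ : QuasiConcave ρ) :
    SurjOn (phiInv p q ρ) (Ioi 0) (Ioi 0) :=
  (hasScalingBounds_phiInv hp hpq hρ.hasScalingBounds).surjOn (one_div_pos.2 (hp.trans_le hpq))
    (continuousOn_phiInv hρ) (by simpa [phiInv] using hρ.2.1 1 one_pos)

theorem concaveOn_phiInv (hp : 1 ≤ p) (hpq : p ≤ q) (hρ : QuasiConcave ρ)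
    (hρc : ConcaveOn ℝ (Ici 0) ρ) : ConcaveOn ℝ (Ici 0) (phiInv p q ρ) := by
  have hp0 : 0 < p := one_pos.trans_le hp
  have hinv_le : ∀ r : ℝ, 1 ≤ r → 1 / r ≤ 1 := fun r hr => (div_le_one (one_pos.trans_le hr)).2 hr
  have hroot : ∀ r : ℝ, 1 ≤ r → ConcaveOn ℝ (Ioi 0) (fun u : ℝ => u ^ (1 / r)) := fun r hr =>
    (Real.concaveOn_rpow (one_div_nonneg.2 (zero_le_one.trans hr)) (hinv_le r hr)).subset
      Ioi_subset_Ici_self (convex_Ioi 0)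
  have hIoi : ConcaveOn ℝ (Ioi 0) (phiInv p q ρ) := by
    refine (hρc.mul_comp_div hρ.hasScalingBounds (hroot q (hp.trans hpq)) (hroot p hp)
      (fun u hu => Real.rpow_pos_of_pos hu _) (fun u hu => Real.rpow_pos_of_pos hu _)).congr ?_
    intro u (hu : 0 < u)
    simp only [phiInv, Real.rpow_sub hu]
  refine hIoi.concaveOn_Ici_of_mul_le (phiInv_zero hp0.ne') fun c u hc hc1 hu => ?_
  exact (hasScalingBounds_phiInv hp0 hpq hρ.hasScalingBounds).mul_le_apply_mul (hinv_le p hp)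
    (fun _ hu => (phiInv_pos hρ hu).le) hc hc1 hu

end phiInv

/-- The function `h` with `φ u = u ^ q * h (u ^ (p - q))`. -/
noncomputable def rescaled (p q : ℝ) (φ : ℝ → ℝ) (s : ℝ) : ℝ :=
  s ^ (q / (q - p)) * φ (s ^ (1 / (p - q)))

theorem eq_rpow_mul_rescaled {p q : ℝ} (hpq : p ≠ q) (φ : ℝ → ℝ) {u : ℝ} (hu : 0 < u) :
    φ u = u ^ q * rescaled p q φ (u ^ (p - q)) := by
  have hpq' : p - q ≠ 0 := sub_ne_zero.2 hpq
  have hqp : q - p ≠ 0 := sub_ne_zero.2 hpq.symm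
  have hpow : (u ^ (p - q)) ^ (q / (q - p)) = u ^ (-q) := by
    rw [← Real.rpow_mul hu.le]; congr 1; field_simp; ring
  have hroot : (u ^ (p - q)) ^ (1 / (p - q)) = u := by
    rw [← Real.rpow_mul hu.le, mul_one_div_cancel hpq', Real.rpow_one]
  rw [rescaled, hpow, hroot, ← mul_assoc, ← Real.rpow_add hu, add_neg_cancel, Real.rpow_zero,
    one_mul]

theorem quasiConcave_rescaled {p q : ℝ} {φ : ℝ → ℝ} (hq : 0 < q) (hpq : p < q)
    (hφ : HasScalingBounds φ p q) (hcont : ContinuousOn φ (Ioi 0)) (hpos : ∀ x, 0 < x → 0 < φ x) :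
    QuasiConcave (rescaled p q φ) := by
  have hpq' : p - q ≠ 0 := sub_ne_zero.2 hpq.ne
  have hqp : q - p ≠ 0 := sub_ne_zero.2 hpq.ne'
  refine HasScalingBounds.quasiConcave ?_ ?_ (fun s hs => ?_) ?_
  · have h := hφ.comp_rpow (q / (q - p)) (e := 1 / (p - q))
      (one_div_nonpos.2 (sub_nonpos.2 hpq.le))
    have h₀ : q / (q - p) + 1 / (p - q) * q = 0 := by field_simp; ring
    have h₁ : q / (q - p) + 1 / (p - q) * p = 1 := by field_simp; ring
    rwa [h₀, h₁] at h
  · exact (continuousOn_Ioi_rpow _).mul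
      (hcont.comp (continuousOn_Ioi_rpow _) fun s hs => Real.rpow_pos_of_pos hs _)
  · exact mul_pos (Real.rpow_pos_of_pos hs _) (hpos _ (Real.rpow_pos_of_pos hs _))
  · rw [rescaled, Real.zero_rpow (div_ne_zero hq.ne' hqp), zero_mul]

theorem stmt5 (p q : ℝ) (hp : 1 ≤ p) (hpq : p < q)
    (ρ : ℝ → ℝ) (hρ : QuasiConcave ρ) (hρconc : ConcaveOn ℝ (Set.Ici 0) ρ)
    (φ : ℝ → ℝ) (hφ0 : φ 0 = 0)
    -- `φ` is the inverse on `(0,∞)` of `u ↦ u^{1/p} ρ(u^{1/q - 1/p})`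
    (hinv : ∀ u : ℝ, 0 < u → φ (u ^ (1/p) * ρ (u ^ (1/q - 1/p))) = u) :
    ConvexOn ℝ (Set.Ici 0) φ ∧
      ∃ h : ℝ → ℝ, QuasiConcave h ∧ ∀ u : ℝ, 0 < u → φ u = u ^ q * h (u ^ (p - q)) := by
  have hp0 : 0 < p := one_pos.trans_le hp
  have hφ : ∀ x, 0 < x → 0 < φ x ∧ phiInv p q ρ (φ x) = x := by
    intro x hx
    obtain ⟨u, hu, rfl⟩ := surjOn_phiInv hp0 hpq.le hρ hx
    rw [show φ (phiInv p q ρ u) = u from hinv u hu]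
    exact ⟨hu, rfl⟩
  have hφ' : ∀ x ∈ Ici (0 : ℝ), φ x ∈ Ici 0 ∧ phiInv p q ρ (φ x) = x := by
    intro x (hx : 0 ≤ x)
    rcases hx.eq_or_lt with rfl | hx
    · rw [hφ0, phiInv_zero hp0.ne']; exact ⟨mem_Ici.2 le_rfl, rfl⟩
    · exact ⟨(hφ x hx).1.le, (hφ x hx).2⟩
  have hconv : ConvexOn ℝ (Ici 0) φ :=
    (concaveOn_phiInv hp hpq.le hρ hρconc).convexOn_of_rightInvOn
      (strictMonoOn_phiInv hp0 hpq.le hρ) (convex_Ici 0) (fun x hx => (hφ' x hx).1)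
      (fun x hx => (hφ' x hx).2)
  have hφb : HasScalingBounds φ p q := by
    simpa only [one_div, inv_inv] using
      (hasScalingBounds_phiInv hp0 hpq.le hρ.hasScalingBounds).of_rightInvOn
        (one_div_pos.2 (hp0.trans hpq)) (one_div_pos.2 hp0) (fun _ => phiInv_pos hρ)
        (fun x hx => (hφ x hx).1) (fun x hx => (hφ x hx).2)
  have hcont : ContinuousOn φ (Ioi 0) :=
    (hconv.subset Ioi_subset_Ici_self (convex_Ioi 0)).continuousOn isOpen_Ioi
  exact ⟨hconv, rescaled p q φ,
    quasiConcave_rescaled (hp0.trans hpq) hpq hφb hcont fun x hx => (hφ x hx).1,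
    fun u hu => eq_rpow_mul_rescaled hpq.ne φ hu⟩
end

section
/- Let 1≤p<∞ and 1<q<∞. Then the Sparr constant satisfies γ_{p,q} = inf{ x + ((p/q)·x^{p-1})^{1/(q-1)} : x ≥ 0 and x^p + ((p/q)·x^{p-1})^{q/(q-1)} = 1 }. In particular, γ_{q,q} = 2^{1-1/q} and γ_{1,q} = 1 + q^{1/(1-q)} − q^{q/(1-q)}. -/
/-!
The tangent lines of the convex functions `t ↦ t ^ p` and `t ↦ t ^ q` show that on the segment
`x + y = γ`, `x, y ≥ 0`, the sum `x ^ p + y ^ q` is minimal where `p x ^ (p - 1) = q y ^ (q - 1)`,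
i.e. at `y = ((p / q) x ^ (p - 1)) ^ (1 / (q - 1))`. Such a critical pair exists on every segment
of length `γ ≥ 1` by the intermediate value theorem, and a segment whose minimum is `1` has
length at least `1` (look at the endpoint `(γ, 0)`). For `p = q` the critical pair is
`x = y = 2 ^ (-1 / q)`; for `p = 1` it is `y = q ^ (1 / (1 - q))`, `x = 1 - y ^ q`.
-/

open Real Set

/-- The Sparr constant `γ_{p,q} = inf{γ > 0 : inf_{x+y=γ, x,y ≥ 0} (x^p + y^q) = 1}`. -/
noncomputable def sparr (p q : ℝ) : ℝ :=
  sInf {γ : ℝ | 0 < γ ∧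
    sInf {v : ℝ | ∃ x y : ℝ, 0 ≤ x ∧ 0 ≤ y ∧ x + y = γ ∧ v = x ^ p + y ^ q} = 1}

lemma rpow_tangent_le {r s t : ℝ} (hr : 1 ≤ r) (hs : 0 ≤ s) (ht : 0 ≤ t) :
    s ^ r + r * s ^ (r - 1) * (t - s) ≤ t ^ r := by
  rcases hs.eq_or_lt with rfl | hs
  · rcases hr.eq_or_lt with rfl | hr
    · simp
    · rw [zero_rpow (by linarith), zero_rpow (by linarith)]
      simpa using rpow_nonneg ht r
  · have bernoulli := one_add_mul_self_le_rpow_one_add (s := t / s - 1) (by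
      linarith [div_nonneg ht hs.le]) hr
    rw [add_sub_cancel, div_rpow ht hs.le, le_div_iff₀ (rpow_pos_of_pos hs r)] at bernoulli
    calc s ^ r + r * s ^ (r - 1) * (t - s) = (1 + r * (t / s - 1)) * s ^ r := by
          rw [rpow_sub_one hs.ne']; field_simp
      _ ≤ t ^ r := bernoulli

noncomputable def segmentInf (p q γ : ℝ) : ℝ :=
  sInf {v : ℝ | ∃ x y : ℝ, 0 ≤ x ∧ 0 ≤ y ∧ x + y = γ ∧ v = x ^ p + y ^ q}

lemma sparr_eq_sInf_segmentInf (p q : ℝ) :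
    sparr p q = sInf {γ : ℝ | 0 < γ ∧ segmentInf p q γ = 1} := rfl

section Segment

variable {p q x y : ℝ}

lemma add_rpow_le_of_deriv_eq (hp : 1 ≤ p) (hq : 1 ≤ q) (hx : 0 ≤ x) (hy : 0 ≤ y)
    (hderiv : p * x ^ (p - 1) = q * y ^ (q - 1)) {a b : ℝ} (ha : 0 ≤ a) (hb : 0 ≤ b)
    (hab : a + b = x + y) :
    x ^ p + y ^ q ≤ a ^ p + b ^ q := by
  have tangent_p := rpow_tangent_le hp hx ha
  have tangent_q := rpow_tangent_le hq hy hb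
  rw [hderiv] at tangent_p
  have hb' : b - y = -(a - x) := by linarith
  rw [hb'] at tangent_q
  linarith

lemma segmentInf_eq_of_deriv_eq (hp : 1 ≤ p) (hq : 1 ≤ q) (hx : 0 ≤ x) (hy : 0 ≤ y)
    (hderiv : p * x ^ (p - 1) = q * y ^ (q - 1)) :
    segmentInf p q (x + y) = x ^ p + y ^ q := by
  refine IsLeast.csInf_eq ⟨⟨x, y, hx, hy, rfl, rfl⟩, ?_⟩
  rintro v ⟨a, b, ha, hb, hab, rfl⟩
  exact add_rpow_le_of_deriv_eq hp hq hx hy hderiv ha hb hab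

lemma one_le_of_segmentInf_eq_one {γ : ℝ} (hp : 0 < p) (hq : 0 < q) (hγ : 0 ≤ γ)
    (h : segmentInf p q γ = 1) : 1 ≤ γ := by
  have hle : segmentInf p q γ ≤ γ ^ p + 0 ^ q := by
    refine csInf_le ⟨0, ?_⟩ ⟨γ, 0, hγ, le_rfl, add_zero γ, rfl⟩
    rintro v ⟨a, b, ha, hb, -, rfl⟩
    positivity
  rw [h, zero_rpow hq.ne', add_zero] at hle
  by_contra! hγ1
  linarith [rpow_lt_one hγ hγ1 hp]

end Segment

noncomputable def critPartner (p q x : ℝ) : ℝ :=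
  ((p / q) * x ^ (p - 1)) ^ (1 / (q - 1))

section CritPartner

variable {p q : ℝ}

lemma critPartner_nonneg (hp : 0 ≤ p) (hq : 0 ≤ q) {x : ℝ} (hx : 0 ≤ x) :
    0 ≤ critPartner p q x := by
  unfold critPartner; positivity

lemma mul_critPartner_rpow (hp : 0 ≤ p) (hq : 1 < q) {x : ℝ} (hx : 0 ≤ x) :
    q * critPartner p q x ^ (q - 1) = p * x ^ (p - 1) := by
  rw [critPartner, ← rpow_mul (by positivity), one_div_mul_cancel (by linarith), rpow_one]
  field_simp

lemma critPartner_rpow (hp : 0 ≤ p) (hq : 0 ≤ q) {x : ℝ} (hx : 0 ≤ x) :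
    critPartner p q x ^ q = ((p / q) * x ^ (p - 1)) ^ (q / (q - 1)) := by
  rw [critPartner, ← rpow_mul (by positivity), one_div_mul_eq_div]

lemma critPartner_zero_le_one (hp : 1 ≤ p) (hq : 1 < q) : critPartner p q 0 ≤ 1 := by
  refine rpow_le_one (by positivity) ?_ (by have := sub_pos.2 hq; positivity)
  rcases hp.eq_or_lt with rfl | hp
  · simpa using inv_le_one_of_one_le₀ hq.le
  · simp [zero_rpow (sub_pos.2 hp).ne']

lemma continuous_critPartner (hp : 1 ≤ p) (hq : 1 < q) : Continuous (critPartner p q) :=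
  ((continuous_rpow_const (sub_nonneg.2 hp)).const_mul (p / q)).rpow_const
    fun _ => Or.inr (by have := sub_pos.2 hq; positivity)

lemma exists_add_critPartner_eq (hp : 1 ≤ p) (hq : 1 < q) {γ : ℝ} (hγ : 1 ≤ γ) :
    ∃ x, 0 ≤ x ∧ x + critPartner p q x = γ := by
  have hψ := (continuous_id.add (continuous_critPartner hp hq)).continuousOn (s := Icc 0 γ)
  have hψ0 : 0 + critPartner p q 0 ≤ γ := by linarith [critPartner_zero_le_one hp hq]
  have hψγ : γ ≤ γ + critPartner p q γ :=
    le_add_of_nonneg_right (critPartner_nonneg (by linarith) (by linarith) (by linarith))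
  obtain ⟨x, hx, hxγ⟩ := intermediate_value_Icc (by linarith) hψ ⟨hψ0, hψγ⟩
  exact ⟨x, hx.1, hxγ⟩

lemma critPartner_self (hq : 1 < q) {x : ℝ} (hx : 0 ≤ x) : critPartner q q x = x := by
  rw [critPartner, div_self (by linarith), one_mul, ← rpow_mul hx,
    mul_one_div_cancel (by linarith), rpow_one]

lemma critPartner_one (hq : 0 < q) (x : ℝ) : critPartner 1 q x = q ^ (1 / (1 - q)) := by
  rw [critPartner, sub_self, rpow_zero, mul_one, one_div q, inv_rpow hq.le, ← rpow_neg hq.le,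
    ← div_neg, neg_sub]

end CritPartner

lemma setOf_segmentInf_eq_one_eq_image {p q : ℝ} (hp : 1 ≤ p) (hq : 1 < q) :
    {γ : ℝ | 0 < γ ∧ segmentInf p q γ = 1} =
      (fun x => x + critPartner p q x) '' {x | 0 ≤ x ∧ x ^ p + critPartner p q x ^ q = 1} := by
  have segmentInf_eq : ∀ x, 0 ≤ x →
      segmentInf p q (x + critPartner p q x) = x ^ p + critPartner p q x ^ q := fun x hx =>
    segmentInf_eq_of_deriv_eq hp hq.le hx (critPartner_nonneg (by linarith) (by linarith) hx)
      (mul_critPartner_rpow (by linarith) hq hx).symm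
  ext γ
  constructor
  · rintro ⟨hγ, h⟩
    obtain ⟨x, hx, rfl⟩ := exists_add_critPartner_eq hp hq
      (one_le_of_segmentInf_eq_one (by linarith) (by linarith) hγ.le h)
    exact ⟨x, ⟨hx, segmentInf_eq x hx ▸ h⟩, rfl⟩
  · rintro ⟨x, ⟨hx, h⟩, rfl⟩
    refine ⟨?_, (segmentInf_eq x hx).trans h⟩
    have hy := critPartner_nonneg (by linarith) (by linarith) hx (p := p) (q := q)
    rcases (add_nonneg hx hy).eq_or_lt with h0 | h0
    · obtain ⟨rfl, hy0⟩ := (add_eq_zero_iff_of_nonneg hx hy).1 h0.symm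
      rw [hy0, zero_rpow (by linarith), zero_rpow (by linarith)] at h
      norm_num at h
    · exact h0

lemma sparr_eq_sInf_image {p q : ℝ} (hp : 1 ≤ p) (hq : 1 < q) :
    sparr p q = sInf ((fun x => x + critPartner p q x) ''
      {x | 0 ≤ x ∧ x ^ p + critPartner p q x ^ q = 1}) := by
  rw [sparr_eq_sInf_segmentInf, setOf_segmentInf_eq_one_eq_image hp hq]

lemma sparr_self {q : ℝ} (hq : 1 < q) : sparr q q = 2 ^ (1 - 1 / q) := by
  have hq0 : q ≠ 0 := by linarith
  have hset : {x | 0 ≤ x ∧ x ^ q + critPartner q q x ^ q = 1} = {(1 / 2) ^ q⁻¹} := by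
    ext x
    simp only [mem_ofPred_eq, mem_singleton_iff]
    constructor
    · rintro ⟨hx, h⟩
      rw [critPartner_self hq hx] at h
      exact ((rpow_inv_eq (by norm_num) hx hq0).2 (by linarith)).symm
    · rintro rfl
      refine ⟨by positivity, ?_⟩
      rw [critPartner_self hq (by positivity), ← rpow_mul (by norm_num), inv_mul_cancel₀ hq0]
      norm_num
  rw [sparr_eq_sInf_image hq.le hq, hset, image_singleton, csInf_singleton,
    critPartner_self hq (by positivity), rpow_sub two_pos, rpow_one, one_div, one_div,
    inv_rpow zero_le_two]
  ring

lemma sparr_one {q : ℝ} (hq : 1 < q) :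
    sparr 1 q = 1 + q ^ (1 / (1 - q)) - q ^ (q / (1 - q)) := by
  have hq0 : 0 < q := by linarith
  have hpow : (q ^ (1 / (1 - q))) ^ q = q ^ (q / (1 - q)) := by
    rw [← rpow_mul hq0.le, one_div_mul_eq_div]
  have hset : {x | 0 ≤ x ∧ x ^ (1 : ℝ) + critPartner 1 q x ^ q = 1} =
      {1 - q ^ (q / (1 - q))} := by
    ext x
    simp only [mem_ofPred_eq, mem_singleton_iff, rpow_one, critPartner_one hq0, hpow]
    constructor
    · rintro ⟨-, h⟩
      linarith
    · rintro rfl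
      refine ⟨?_, by ring⟩
      have : q ^ (q / (1 - q)) ≤ 1 :=
        rpow_le_one_of_one_le_of_nonpos hq.le (div_nonpos_of_nonneg_of_nonpos hq0.le (by linarith))
      linarith
  rw [sparr_eq_sInf_image le_rfl hq, hset, image_singleton, csInf_singleton, critPartner_one hq0]
  ring

theorem stmt9 (p q : ℝ) (hp : 1 ≤ p) (hq : 1 < q) :
    sparr p q = sInf {v : ℝ | ∃ x : ℝ, 0 ≤ x ∧
        x ^ p + ((p / q) * x ^ (p - 1)) ^ (q / (q - 1)) = 1 ∧
        v = x + ((p / q) * x ^ (p - 1)) ^ (1 / (q - 1))} ∧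
      sparr q q = 2 ^ (1 - 1 / q) ∧
      sparr 1 q = 1 + q ^ (1 / (1 - q)) - q ^ (q / (1 - q)) := by
  refine ⟨?_, sparr_self hq, sparr_one hq⟩
  have hpow : ∀ x, 0 ≤ x →
      critPartner p q x ^ q = ((p / q) * x ^ (p - 1)) ^ (q / (q - 1)) := fun x hx =>
    critPartner_rpow (by linarith) (by linarith) hx
  rw [sparr_eq_sInf_image hp hq]
  congr 1
  ext v
  refine exists_congr fun x => ⟨?_, ?_⟩
  · rintro ⟨⟨hx, h⟩, rfl⟩
    exact ⟨hx, hpow x hx ▸ h, rfl⟩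
  · rintro ⟨hx, h, rfl⟩
    exact ⟨⟨hx, (hpow x hx).symm ▸ h⟩, rfl⟩
end

section
/- If 1≤p≤q<∞, then the Sparr constant satisfies 2^{1-1/p} ≤ γ_{p,q} ≤ 2^{1-1/q}. -/
open Set

namespace Sparr

variable {p q γ : ℝ}

lemma two_rpow_one_sub_one_div_div_two_rpow (hp : p ≠ 0) :
    ((2 : ℝ) ^ (1 - 1 / p) / 2) ^ p = 1 / 2 := by
  rw [Real.div_rpow (by positivity) zero_le_two, ← Real.rpow_mul zero_le_two,
    show (1 - 1 / p) * p = p - 1 by field_simp, Real.rpow_sub two_pos, Real.rpow_one]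
  field_simp

lemma two_rpow_one_sub_one_div_le_two (hp : 0 ≤ p) : (2 : ℝ) ^ (1 - 1 / p) ≤ 2 := by
  calc (2 : ℝ) ^ (1 - 1 / p) ≤ 2 ^ (1 : ℝ) :=
        Real.rpow_le_rpow_of_exponent_le one_le_two (by simp; positivity)
    _ = 2 := Real.rpow_one 2

lemma one_le_rpow_add_rpow (hq : 1 ≤ q) {x y : ℝ} (hx : 0 ≤ x) (hy : 0 ≤ y)
    (hxy : x + y = 2 ^ (1 - 1 / q)) : 1 ≤ x ^ q + y ^ q := by
  have h := (convexOn_rpow hq).2 (mem_Ici.2 hx) (mem_Ici.2 hy) (by norm_num : (0:ℝ) ≤ 1/2)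
    (by norm_num : (0:ℝ) ≤ 1/2) (by norm_num)
  simp only [smul_eq_mul] at h
  rw [show 1 / 2 * x + 1 / 2 * y = (2:ℝ) ^ (1 - 1 / q) / 2 by rw [← hxy]; ring,
    two_rpow_one_sub_one_div_div_two_rpow (by linarith)] at h
  linarith

noncomputable def sparrInf (p q γ : ℝ) : ℝ :=
  sInf {v : ℝ | ∃ x y : ℝ, 0 ≤ x ∧ 0 ≤ y ∧ x + y = γ ∧ v = x ^ p + y ^ q}

lemma sparr_eq_sInf : sparr p q = sInf {γ : ℝ | 0 < γ ∧ sparrInf p q γ = 1} := rfl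

lemma sparrInf_le {x y : ℝ} (hx : 0 ≤ x) (hy : 0 ≤ y) (hxy : x + y = γ) :
    sparrInf p q γ ≤ x ^ p + y ^ q :=
  csInf_le ⟨0, by rintro v ⟨x, y, hx, hy, -, rfl⟩; positivity⟩ ⟨x, y, hx, hy, hxy, rfl⟩

lemma le_sparrInf {c : ℝ} (hγ : 0 ≤ γ)
    (h : ∀ x y : ℝ, 0 ≤ x → 0 ≤ y → x + y = γ → c ≤ x ^ p + y ^ q) : c ≤ sparrInf p q γ :=
  le_csInf ⟨_, γ, 0, hγ, le_rfl, add_zero γ, rfl⟩ <| by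
    rintro v ⟨x, y, hx, hy, hxy, rfl⟩
    exact h x y hx hy hxy

lemma sparrInf_eq_sInf_image_Icc (hγ : 0 ≤ γ) :
    sparrInf p q γ = sInf ((fun t => (t * γ) ^ p + ((1 - t) * γ) ^ q) '' Icc 0 1) := by
  refine congrArg sInf (Set.ext fun v => ⟨?_, ?_⟩)
  · rintro ⟨x, y, hx, hy, hxy, rfl⟩
    rcases hγ.eq_or_lt with rfl | hγ
    · obtain ⟨rfl, rfl⟩ : x = 0 ∧ y = 0 := by constructor <;> linarith
      exact ⟨0, by simp⟩
    · refine ⟨x / γ, ⟨by positivity, (div_le_one hγ).2 (by linarith)⟩, ?_⟩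
      simp only
      rw [div_mul_cancel₀ x hγ.ne', sub_mul, one_mul, div_mul_cancel₀ x hγ.ne', ← hxy,
        add_sub_cancel_left]
  · rintro ⟨t, ⟨ht0, ht1⟩, rfl⟩
    exact ⟨t * γ, (1 - t) * γ, by positivity, mul_nonneg (by linarith) hγ, by ring, rfl⟩

lemma continuousOn_sparrInf (hp : 0 ≤ p) (hq : 0 ≤ q) : ContinuousOn (sparrInf p q) (Ici 0) := by
  have hcont : Continuous fun γ : ℝ =>
      sInf ((fun t : ℝ => (t * γ) ^ p + ((1 - t) * γ) ^ q) '' Icc 0 1) :=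
    isCompact_Icc.continuous_sInf <|
      ((Real.continuous_rpow_const hp).comp (by fun_prop)).add
        ((Real.continuous_rpow_const hq).comp (by fun_prop))
  exact hcont.continuousOn.congr fun γ hγ => sparrInf_eq_sInf_image_Icc hγ

lemma sparrInf_le_two_mul_half_rpow (hp : 0 ≤ p) (hpq : p ≤ q) (hγ0 : 0 ≤ γ) (hγ2 : γ ≤ 2) :
    sparrInf p q γ ≤ 2 * (γ / 2) ^ p := by
  have hγ : 0 ≤ γ / 2 := by positivity
  have : (γ / 2) ^ q ≤ (γ / 2) ^ p :=
    Real.rpow_le_rpow_of_exponent_ge' hγ (by linarith) hp hpq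
  linarith [sparrInf_le (p := p) (q := q) hγ hγ (add_halves γ)]

lemma two_rpow_one_sub_one_div_le_of_sparrInf_eq_one (hp : 0 < p) (hpq : p ≤ q) (hγ : 0 ≤ γ)
    (h : sparrInf p q γ = 1) : (2 : ℝ) ^ (1 - 1 / p) ≤ γ := by
  by_contra! hlt
  have hhalf : (γ / 2) ^ p < ((2 : ℝ) ^ (1 - 1 / p) / 2) ^ p :=
    Real.rpow_lt_rpow (by positivity) (by linarith) hp
  rw [two_rpow_one_sub_one_div_div_two_rpow hp.ne'] at hhalf
  linarith [sparrInf_le_two_mul_half_rpow hp.le hpq hγ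
    (hlt.le.trans (two_rpow_one_sub_one_div_le_two hp.le))]

lemma one_le_sparrInf_two_rpow (hp : 0 ≤ p) (hpq : p ≤ q) (hq : 1 ≤ q) :
    1 ≤ sparrInf p q (2 ^ (1 - 1 / q)) := by
  refine le_sparrInf (by positivity) fun x y hx hy hxy => ?_
  rcases le_or_gt 1 x with hx1 | hx1
  · have : 1 ≤ x ^ p := Real.one_le_rpow hx1 hp
    have : 0 ≤ y ^ q := by positivity
    linarith
  · have : x ^ q ≤ x ^ p := Real.rpow_le_rpow_of_exponent_ge' hx hx1.le hp hpq
    linarith [one_le_rpow_add_rpow hq hx hy hxy]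

lemma exists_sparrInf_eq_one (hp : 1 ≤ p) (hpq : p ≤ q) :
    ∃ γ ∈ Icc ((2 : ℝ) ^ (1 - 1 / p)) (2 ^ (1 - 1 / q)), sparrInf p q γ = 1 := by
  have hp0 : 0 < p := zero_lt_one.trans_le hp
  have hq : 1 ≤ q := hp.trans hpq
  have hle : (2 : ℝ) ^ (1 - 1 / p) ≤ 2 ^ (1 - 1 / q) :=
    Real.rpow_le_rpow_of_exponent_le one_le_two
      (sub_le_sub_left (one_div_le_one_div_of_le hp0 hpq) 1)
  have hlow : sparrInf p q (2 ^ (1 - 1 / p)) ≤ 1 := by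
    have := sparrInf_le_two_mul_half_rpow (q := q) hp0.le hpq (by positivity)
      (two_rpow_one_sub_one_div_le_two hp0.le)
    rwa [two_rpow_one_sub_one_div_div_two_rpow hp0.ne', mul_one_div_cancel two_ne_zero] at this
  have hcont : ContinuousOn (sparrInf p q) (Icc (2 ^ (1 - 1 / p)) (2 ^ (1 - 1 / q))) :=
    (continuousOn_sparrInf hp0.le (by linarith)).mono fun γ hγ =>
      (by positivity : (0 : ℝ) ≤ 2 ^ (1 - 1 / p)).trans hγ.1
  exact intermediate_value_Icc hle hcont ⟨hlow, one_le_sparrInf_two_rpow hp0.le hpq hq⟩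

end Sparr

theorem stmt11 (p q : ℝ) (hp : 1 ≤ p) (hpq : p ≤ q) :
    (2:ℝ) ^ (1 - 1/p) ≤ sparr p q ∧ sparr p q ≤ (2:ℝ) ^ (1 - 1/q) := by
  obtain ⟨γ, hγ, hγ1⟩ := Sparr.exists_sparrInf_eq_one hp hpq
  have hγ0 : 0 < γ := (by positivity : (0:ℝ) < 2 ^ (1 - 1 / p)).trans_le hγ.1
  have hlower : ∀ γ' ∈ {γ : ℝ | 0 < γ ∧ Sparr.sparrInf p q γ = 1}, (2:ℝ) ^ (1 - 1/p) ≤ γ' :=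
    fun γ' hγ' => Sparr.two_rpow_one_sub_one_div_le_of_sparrInf_eq_one
      (zero_lt_one.trans_le hp) hpq hγ'.1.le hγ'.2
  rw [Sparr.sparr_eq_sInf]
  exact ⟨le_csInf ⟨γ, hγ0, hγ1⟩ hlower, (csInf_le ⟨_, hlower⟩ ⟨hγ0, hγ1⟩).trans hγ.2⟩
end

section
/- Define h:[0,∞)→[0,∞) by h(0)=0 and h(t) = t·ln(1 + 1/t) for t>0. Then h is strictly increasing and concave on (0,∞) (indeed h'(t) = ln(1+1/t) − 1/(1+t) > 0 and h''(t) = −1/(t(1+t)²) < 0 for t>0), and for all p,q with 1≤p<q<∞ the function φ(u) = u^q h(u^{p-q}) = u^p ln(1 + u^{q-p}) is convex on [0,∞). -/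
/-! All claims are read off from explicit first and second derivatives. Writing `r = q - p`,
the second derivative of `u ^ p * log (1 + u ^ r)` is a sum of two terms that are visibly
nonnegative once `p ≥ 1` and `r ≥ 0`. -/

open Set Real Filter

section MulLogOneAddInv

theorem hasDerivAt_one_add_one_div {t : ℝ} (ht : t ≠ 0) :
    HasDerivAt (fun x : ℝ => 1 + 1/x) (-(t^2)⁻¹) t := by
  simpa [one_div] using (hasDerivAt_inv ht).const_add 1

theorem hasDerivAt_mul_log_one_add_inv {t : ℝ} (ht : 0 < t) :
    HasDerivAt (fun x : ℝ => x * log (1 + 1/x)) (log (1 + 1/t) - 1/(1+t)) t := by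
  have hinv := hasDerivAt_one_add_one_div ht.ne'
  refine ((hasDerivAt_id' t).mul (hinv.log (by positivity))).congr_deriv ?_
  have : 1 + t ≠ 0 := by positivity
  field_simp
  ring

theorem hasDerivAt_log_one_add_inv_sub_inv {t : ℝ} (ht : 0 < t) :
    HasDerivAt (fun x : ℝ => log (1 + 1/x) - 1/(1+x)) (-(1/(t * (1+t)^2))) t := by
  have hinv := hasDerivAt_one_add_one_div ht.ne'
  have hinv' : HasDerivAt (fun x : ℝ => 1/(1+x)) (-(1/(1+t)^2)) t := by
    simp only [one_div]
    exact (((hasDerivAt_id' t).const_add 1).inv (by positivity)).congr_deriv (by ring)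
  refine ((hinv.log (by positivity)).sub hinv').congr_deriv ?_
  have : 1 + t ≠ 0 := by positivity
  field_simp
  ring

theorem inv_one_add_lt_log_one_add_inv {t : ℝ} (ht : 0 < t) : 1/(1+t) < log (1 + 1/t) := by
  refine lt_of_le_of_lt ?_ (lt_log_one_add_of_pos (one_div_pos.2 ht))
  rw [div_le_div_iff₀ (by positivity) (by positivity)]
  field_simp
  linarith

theorem strictMonoOn_mul_log_one_add_inv :
    StrictMonoOn (fun x : ℝ => x * log (1 + 1/x)) (Ioi 0) :=
  strictMonoOn_of_hasDerivWithinAt_pos (convex_Ioi 0)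
    (fun _ ht => (hasDerivAt_mul_log_one_add_inv ht).continuousAt.continuousWithinAt)
    (fun _ ht => (hasDerivAt_mul_log_one_add_inv (interior_Ioi.subset ht)).hasDerivWithinAt)
    (fun _ ht => sub_pos.2 (inv_one_add_lt_log_one_add_inv (interior_Ioi.subset ht)))

theorem concaveOn_mul_log_one_add_inv :
    ConcaveOn ℝ (Ioi 0) (fun x : ℝ => x * log (1 + 1/x)) :=
  concaveOn_of_hasDerivWithinAt2_nonpos (convex_Ioi 0)
    (fun _ ht => (hasDerivAt_mul_log_one_add_inv ht).continuousAt.continuousWithinAt)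
    (fun _ ht => (hasDerivAt_mul_log_one_add_inv (interior_Ioi.subset ht)).hasDerivWithinAt)
    (fun _ ht => (hasDerivAt_log_one_add_inv_sub_inv (interior_Ioi.subset ht)).hasDerivWithinAt)
    (fun t ht => by
      have : 0 < t := interior_Ioi.subset ht
      exact (neg_neg_of_pos (by positivity)).le)

end MulLogOneAddInv

section RpowMulLogOneAddRpow

variable {p r : ℝ}

theorem hasDerivAt_rpow_mul_log_one_add_rpow {u : ℝ} (hu : 0 < u) :
    HasDerivAt (fun x : ℝ => x ^ p * log (1 + x ^ r))
      (p * u^(p-1) * log (1 + u^r) + r * u^(p+r-1) / (1 + u^r)) u := by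
  have hA : HasDerivAt (fun x : ℝ => x ^ p) (p * u^(p-1)) u :=
    hasDerivAt_rpow_const (Or.inl hu.ne')
  have hB : HasDerivAt (fun x : ℝ => 1 + x ^ r) (r * u^(r-1)) u :=
    (hasDerivAt_rpow_const (Or.inl hu.ne')).const_add 1
  refine (hA.mul (hB.log (by positivity))).congr_deriv ?_
  have : u^p * u^(r-1) = u^(p+r-1) := by rw [← rpow_add hu]; ring_nf
  rw [← this]
  ring

theorem hasDerivAt_deriv_rpow_mul_log_one_add_rpow {u : ℝ} (hu : 0 < u) :
    HasDerivAt (fun x : ℝ => p * x^(p-1) * log (1 + x^r) + r * x^(p+r-1) / (1 + x^r))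
      (p * (p-1) * u^(p-2) * log (1 + u^r)
        + r * u^(p+r-2) * ((2*p+r-1) + (2*p-1) * u^r) / (1 + u^r)^2) u := by
  have hv : 0 < 1 + u^r := by positivity
  have hA : HasDerivAt (fun x : ℝ => x ^ (p-1)) ((p-1) * u^(p-1-1)) u :=
    hasDerivAt_rpow_const (Or.inl hu.ne')
  have hB : HasDerivAt (fun x : ℝ => 1 + x ^ r) (r * u^(r-1)) u :=
    (hasDerivAt_rpow_const (Or.inl hu.ne')).const_add 1
  have hC : HasDerivAt (fun x : ℝ => x ^ (p+r-1)) ((p+r-1) * u^(p+r-1-1)) u :=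
    hasDerivAt_rpow_const (Or.inl hu.ne')
  refine (((hA.const_mul p).mul (hB.log hv.ne')).add
    ((hC.const_mul r).div hB hv.ne')).congr_deriv ?_
  have k1 : u^(p-1-1) = u^(p-2) := by ring_nf
  have k2 : u^(p+r-1-1) = u^(p+r-2) := by ring_nf
  have k3 : u^(p-1) * u^(r-1) = u^(p+r-2) := by rw [← rpow_add hu]; ring_nf
  have k4 : u^(p+r-1) * u^(r-1) = u^(p+r-2) * u^r := by
    rw [← rpow_add hu, ← rpow_add hu]; ring_nf
  rw [k1, k2]
  field_simp
  linear_combination (p * r * (1 + u^r)) * k3 + (-r^2) * k4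

theorem convexOn_rpow_mul_log_one_add_rpow (hp : 1 ≤ p) (hr : 0 ≤ r) :
    ConvexOn ℝ (Ici 0) (fun u : ℝ => u ^ p * log (1 + u ^ r)) := by
  refine convexOn_of_hasDerivWithinAt2_nonneg (convex_Ici 0) (fun u hu => ?_)
    (fun _ hu => (hasDerivAt_rpow_mul_log_one_add_rpow (interior_Ici.subset hu)).hasDerivWithinAt)
    (fun _ hu =>
      (hasDerivAt_deriv_rpow_mul_log_one_add_rpow (interior_Ici.subset hu)).hasDerivWithinAt)
    (fun u hu => ?_)
  · have hpos : 0 < 1 + u ^ r := by have := rpow_nonneg (mem_Ici.1 hu) r; linarith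
    exact ((continuousAt_rpow_const u p (Or.inr (by linarith))).mul
      (((continuousAt_rpow_const u r (Or.inr hr)).const_add 1).log hpos.ne')).continuousWithinAt
  rw [interior_Ici] at hu
  have hL : 0 ≤ log (1 + u^r) := log_nonneg (by have := rpow_pos_of_pos hu r; linarith)
  have hp1 : 0 ≤ p - 1 := by linarith
  have hcoef : 0 ≤ (2*p+r-1) + (2*p-1) * u^r := by
    have := rpow_pos_of_pos hu r; nlinarith
  have := rpow_pos_of_pos hu (p-2)
  have := rpow_pos_of_pos hu (p+r-2)
  positivity

end RpowMulLogOneAddRpow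

theorem stmt16_general (h : ℝ → ℝ)
    (hht : ∀ t : ℝ, 0 < t → h t = t * Real.log (1 + 1/t)) :
    -- `h` is strictly increasing and concave on `(0,∞)`
    StrictMonoOn h (Set.Ioi 0) ∧ ConcaveOn ℝ (Set.Ioi 0) h ∧
    -- indeed `h'(t) = ln(1+1/t) - 1/(1+t) > 0` and `h''(t) = -1/(t(1+t)²) < 0`
    (∀ t : ℝ, 0 < t → deriv h t = Real.log (1 + 1/t) - 1/(1+t)) ∧
    (∀ t : ℝ, 0 < t → 0 < Real.log (1 + 1/t) - 1/(1+t)) ∧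
    (∀ t : ℝ, 0 < t → deriv (deriv h) t = -(1/(t * (1+t)^2))) ∧
    (∀ t : ℝ, 0 < t → -(1/(t * (1+t)^2)) < 0) ∧
    -- for all `1 ≤ p < q < ∞`, the function `φ(u) = u^q h(u^{p-q}) = u^p ln(1+u^{q-p})`
    -- is convex on `[0,∞)`
    (∀ p q : ℝ, 1 ≤ p → p < q →
      (∀ u : ℝ, 0 < u →
        u ^ q * h (u ^ (p - q)) = u ^ p * Real.log (1 + u ^ (q - p))) ∧
      ConvexOn ℝ (Set.Ici 0) (fun u : ℝ => u ^ p * Real.log (1 + u ^ (q - p)))) := by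
  have hEqOn : EqOn (fun t => t * log (1 + 1/t)) h (Ioi 0) := fun t ht => (hht t ht).symm
  have hderiv : ∀ t : ℝ, 0 < t → deriv h t = log (1 + 1/t) - 1/(1+t) := fun t ht =>
    (eventuallyEq_of_mem (Ioi_mem_nhds ht) hht).deriv_eq.trans
      (hasDerivAt_mul_log_one_add_inv ht).deriv
  have hderiv2 : ∀ t : ℝ, 0 < t → deriv (deriv h) t = -(1/(t * (1+t)^2)) := fun t ht =>
    (eventuallyEq_of_mem (Ioi_mem_nhds ht) hderiv).deriv_eq.trans
      (hasDerivAt_log_one_add_inv_sub_inv ht).deriv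
  refine ⟨strictMonoOn_mul_log_one_add_inv.congr hEqOn, concaveOn_mul_log_one_add_inv.congr hEqOn,
    hderiv, fun t ht => sub_pos.2 (inv_one_add_lt_log_one_add_inv ht), hderiv2,
    fun t ht => neg_neg_of_pos (by positivity), fun p q hp hpq => ⟨fun u hu => ?_,
    convexOn_rpow_mul_log_one_add_rpow hp (sub_nonneg.2 hpq.le)⟩⟩
  rw [hht _ (rpow_pos_of_pos hu _), one_div, ← rpow_neg hu.le, neg_sub, ← mul_assoc,
    ← rpow_add hu, add_sub_cancel]

theorem stmt16 (h : ℝ → ℝ) (hh0 : h 0 = 0)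
    (hht : ∀ t : ℝ, 0 < t → h t = t * Real.log (1 + 1/t)) :
    -- `h` is strictly increasing and concave on `(0,∞)`
    StrictMonoOn h (Set.Ioi 0) ∧ ConcaveOn ℝ (Set.Ioi 0) h ∧
    -- indeed `h'(t) = ln(1+1/t) - 1/(1+t) > 0` and `h''(t) = -1/(t(1+t)²) < 0`
    (∀ t : ℝ, 0 < t → deriv h t = Real.log (1 + 1/t) - 1/(1+t)) ∧
    (∀ t : ℝ, 0 < t → 0 < Real.log (1 + 1/t) - 1/(1+t)) ∧
    (∀ t : ℝ, 0 < t → deriv (deriv h) t = -(1/(t * (1+t)^2))) ∧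
    (∀ t : ℝ, 0 < t → -(1/(t * (1+t)^2)) < 0) ∧
    -- for all `1 ≤ p < q < ∞`, the function `φ(u) = u^q h(u^{p-q}) = u^p ln(1+u^{q-p})`
    -- is convex on `[0,∞)`
    (∀ p q : ℝ, 1 ≤ p → p < q →
      (∀ u : ℝ, 0 < u →
        u ^ q * h (u ^ (p - q)) = u ^ p * Real.log (1 + u ^ (q - p))) ∧
      ConvexOn ℝ (Set.Ici 0) (fun u : ℝ => u ^ p * Real.log (1 + u ^ (q - p)))) :=
  stmt16_general h hht
end
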